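/- For odd e > 1, the sum (1/e)·Σ_{f | e} μ(e/f)·2^f·(2^f − 2) is a nonnegative integer. -/

import Mathlib

/-!
The sum equals `∑ μ(e/f) 4^f - 2 ∑ μ(e/f) 2^f`, and `n` divides `∑_{d ∣ n} μ(n/d) a^d` for every
integer `a` (Gauss's congruence). To see the latter at a prime `p`, write `n = p^(k+1) m` with
`p ∤ m` and sum over `c = n/d` instead: only the squarefree `c` and `p c` with `c ∣ m` survive, and
they pair up to `μ(c) (b^(p^(k+1)) - b^(p^k))` with `b = a^(m/c)`, which is divisible by `p^(k+1)`
by Fermat's little theorem lifted along `p`-th powers.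

For nonnegativity, the term `f = e` is `2^e (2^e - 2)`, while every proper divisor satisfies
`2f ≤ e`, so the remaining terms are bounded in absolute value by distinct powers `4^f = 2^(2f)`
with exponents at most `e`, whose sum is less than `2^(e+1)`.
-/

open ArithmeticFunction ArithmeticFunction.Moebius Finset

theorem Nat.Coprime.sum_divisors_mul_eq_sum_sum {M : Type*} [AddCommMonoid M] {m n : ℕ}
    (hmn : m.Coprime n) (g : ℕ → M) :
    ∑ d ∈ (m * n).divisors, g d = ∑ i ∈ m.divisors, ∑ j ∈ n.divisors, g (i * j) := by
  rw [hmn.divisors_mul, sum_map]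
  exact (sum_attach _ fun x => g (x.1 * x.2)).trans (sum_product _ _ _)

theorem Int.prime_pow_succ_dvd_pow_sub_pow {p : ℕ} (hp : p.Prime) (b : ℤ) (k : ℕ) :
    (p : ℤ) ^ (k + 1) ∣ b ^ p ^ (k + 1) - b ^ p ^ k := by
  have := Fact.mk hp
  have fermat : (p : ℤ) ∣ b ^ p - b :=
    (ZMod.intCast_zmod_eq_zero_iff_dvd _ _).mp (by push_cast; rw [ZMod.pow_card, sub_self])
  simpa only [← pow_mul, ← pow_succ'] using dvd_sub_pow_of_dvd_sub fermat k

theorem sum_divisors_prime_pow_mul_moebius_mul {p m : ℕ} (hp : p.Prime) (hpm : ¬p ∣ m)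
    (F : ℕ → ℤ) (k : ℕ) :
    ∑ c ∈ (p ^ (k + 1) * m).divisors, μ c * F c = ∑ c ∈ m.divisors, μ c * (F c - F (p * c)) := by
  have hcop : p.Coprime m := (Nat.Prime.coprime_iff_not_dvd hp).2 hpm
  have hmul (i : ℕ) : ∀ c ∈ m.divisors, μ (p ^ i * c) * F (p ^ i * c) =
      μ (p ^ i) * (μ c * F (p ^ i * c)) := fun c hc => by
    rw [isMultiplicative_moebius.map_mul_of_coprime
      ((hcop.coprime_dvd_right (Nat.dvd_of_mem_divisors hc)).pow_left i), mul_assoc]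
  have hsq (i : ℕ) : μ (p ^ (i + 2)) = 0 := by
    rw [moebius_apply_prime_pow hp (by omega), if_neg (by omega)]
  rw [(hcop.pow_left _).sum_divisors_mul_eq_sum_sum, Nat.sum_divisors_prime_pow hp,
    sum_congr rfl fun i _ => sum_congr rfl (hmul i)]
  simp only [← mul_sum, sum_range_succ', hsq, zero_mul, sum_const_zero, zero_add, pow_zero,
    pow_one, one_mul, moebius_apply_one, moebius_apply_prime hp, neg_one_mul, mul_sub,
    sum_sub_distrib]
  abel

theorem prime_pow_dvd_sum_divisors_moebius_mul_pow {p m : ℕ} (hp : p.Prime) (hpm : ¬p ∣ m)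
    (a : ℤ) (k : ℕ) :
    (p : ℤ) ^ k ∣ ∑ c ∈ (p ^ k * m).divisors, μ c * a ^ ((p ^ k * m) / c) := by
  cases k with
  | zero => exact one_dvd _
  | succ k =>
    rw [sum_divisors_prime_pow_mul_moebius_mul hp hpm]
    refine dvd_sum fun c hc => dvd_mul_of_dvd_right ?_ _
    have hcm := Nat.dvd_of_mem_divisors hc
    have hdiv : p ^ (k + 1) * m / (p * c) = p ^ k * (m / c) := by
      rw [pow_succ', mul_assoc, Nat.mul_div_mul_left _ _ hp.pos, Nat.mul_div_assoc _ hcm]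
    rw [hdiv, Nat.mul_div_assoc _ hcm, pow_mul', pow_mul']
    exact Int.prime_pow_succ_dvd_pow_sub_pow hp _ k

theorem dvd_sum_divisors_moebius_mul_pow (a : ℤ) (n : ℕ) :
    (n : ℤ) ∣ ∑ d ∈ n.divisors, μ (n / d) * a ^ d := by
  rcases eq_or_ne n 0 with rfl | hn
  · simp
  rw [← Nat.sum_div_divisors, sum_congr rfl fun c hc => by
    rw [Nat.div_div_self (Nat.dvd_of_mem_divisors hc) hn], Int.natCast_dvd,
    Nat.dvd_iff_prime_pow_dvd_dvd]
  intro p j hp hpj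
  obtain ⟨k, m, hpm, rfl⟩ := Nat.exists_eq_pow_mul_and_not_dvd hn p hp.ne_one
  have hjk : p ^ j ∣ p ^ k :=
    (Nat.Coprime.pow_left j ((Nat.Prime.coprime_iff_not_dvd hp).2 hpm)).dvd_of_dvd_mul_right hpj
  exact hjk.trans (Int.natCast_dvd.mp (by
    exact_mod_cast prime_pow_dvd_sum_divisors_moebius_mul_pow hp hpm a k))

theorem neg_four_pow_le_moebius_mul_two_pow_mul (n f : ℕ) :
    -4 ^ f ≤ μ n * 2 ^ f * (2 ^ f - 2 : ℤ) := by
  have hμ := abs_le.mp (abs_moebius_le_one (n := n))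
  have h4 : (4 : ℤ) ^ f = 2 ^ f * 2 ^ f := by rw [← mul_pow]; norm_num
  have h1 : (1 : ℤ) ≤ 2 ^ f := one_le_pow₀ (by norm_num)
  nlinarith [mul_le_mul_of_nonneg_right hμ.1 (show 0 ≤ (2 : ℤ) ^ f * (2 ^ f - 1) by nlinarith)]

theorem two_mul_le_of_mem_properDivisors {e f : ℕ} (hf : f ∈ e.properDivisors) : 2 * f ≤ e := by
  obtain ⟨hfe, hlt⟩ := Nat.mem_properDivisors.mp hf
  by_contra! h
  exact hlt.ne' (Nat.eq_of_dvd_of_lt_two_mul (by omega) hfe h)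

theorem sum_properDivisors_four_pow_lt (e : ℕ) : ∑ f ∈ e.properDivisors, 4 ^ f < 2 ^ (e + 1) :=
  calc ∑ f ∈ e.properDivisors, 4 ^ f
      = ∑ k ∈ e.properDivisors.image (2 * ·), 2 ^ k := by
        rw [sum_image fun _ _ _ _ h => by omega]
        exact sum_congr rfl fun f _ => by rw [pow_mul]; norm_num
    _ < 2 ^ (e + 1) := Nat.geomSum_lt le_rfl <| forall_mem_image.2 fun _ hf =>
        Nat.lt_succ_of_le (two_mul_le_of_mem_properDivisors hf)

theorem sum_divisors_moebius_mul_two_pow_mul_nonneg (e : ℕ) :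
    0 ≤ ∑ f ∈ e.divisors, (μ (e / f) * 2 ^ f * (2 ^ f - 2) : ℤ) := by
  rcases lt_or_ge e 2 with he | he
  · interval_cases e <;> simp
  have hproper :
      -(2 : ℤ) ^ (e + 1) < ∑ f ∈ e.properDivisors, (μ (e / f) * 2 ^ f * (2 ^ f - 2) : ℤ) :=
    calc -(2 : ℤ) ^ (e + 1) < ∑ f ∈ e.properDivisors, -(4 : ℤ) ^ f := by
          rw [sum_neg_distrib, neg_lt_neg_iff]
          exact_mod_cast sum_properDivisors_four_pow_lt e
      _ ≤ _ := sum_le_sum fun f _ => neg_four_pow_le_moebius_mul_two_pow_mul _ f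
  have h4 : (4 : ℤ) ≤ 2 ^ e := by
    calc (4 : ℤ) = 2 ^ 2 := by norm_num
      _ ≤ 2 ^ e := pow_le_pow_right₀ (by norm_num) he
  rw [← Nat.cons_self_properDivisors (by omega), sum_cons, Nat.div_self (by omega),
    moebius_apply_one]
  rw [pow_succ] at hproper
  nlinarith

open ArithmeticFunction ArithmeticFunction.Moebius in
theorem hecke4_count_nonneg_integer_general (e : ℕ) :
    ∃ n : ℕ, ∑ f ∈ e.divisors, (μ (e / f) * 2 ^ f * (2 ^ f - 2) : ℤ) = e * n := by
  have hsplit : ∑ f ∈ e.divisors, (μ (e / f) * 2 ^ f * (2 ^ f - 2) : ℤ) =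
      ∑ f ∈ e.divisors, μ (e / f) * 4 ^ f - 2 * ∑ f ∈ e.divisors, μ (e / f) * 2 ^ f := by
    rw [mul_sum, ← sum_sub_distrib]
    refine sum_congr rfl fun f _ => ?_
    rw [show (4 : ℤ) ^ f = 2 ^ f * 2 ^ f by rw [← mul_pow]; norm_num]
    ring
  have hdvd : (e : ℤ) ∣ ∑ f ∈ e.divisors, (μ (e / f) * 2 ^ f * (2 ^ f - 2) : ℤ) := hsplit ▸
    dvd_sub (dvd_sum_divisors_moebius_mul_pow 4 e)
      (dvd_mul_of_dvd_right (dvd_sum_divisors_moebius_mul_pow 2 e) 2)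
  obtain ⟨s, hs⟩ := Int.eq_ofNat_of_zero_le (sum_divisors_moebius_mul_two_pow_mul_nonneg e)
  rw [hs] at hdvd ⊢
  obtain ⟨n, rfl⟩ := Int.natCast_dvd_natCast.mp hdvd
  exact ⟨n, by push_cast; rfl⟩

open ArithmeticFunction ArithmeticFunction.Moebius in
theorem hecke4_count_nonneg_integer (e : ℕ) (he : Odd e) (he1 : 1 < e) :
    ∃ n : ℕ, ∑ f ∈ e.divisors, (μ (e / f) * 2 ^ f * (2 ^ f - 2) : ℤ) = e * n :=
  hecke4_count_nonneg_integer_general e
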